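/- arXiv:1811.12469 — 3 statements merged into one kernel-verified Lean document; each statement's English description precedes it below -/
import Mathlib

section
/- Privacy amplification by subsampling: Let 0 < q < 1/2 and let μ₀, μ₁ be probability measures with μ₁ (ε,δ)-DP close to μ₀. Then the mixture μ = (1−q)·μ₀ + q·μ₁ is (ε', qδ)-DP close to μ₀, where ε' = log(q(e^ε − 1) + 1). -/
/-!
Write `a = μ₀ A`, `b = μ₁ A` and `x = e^ε`; the mixture gives `A` mass `m = (1 - q) a + q b`.
Since `m - a = q (b - a) ≤ q ((x - 1) a + δ)`, the mixture is within a factor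
`e^{ε'} = q (x - 1) + 1` of `μ₀` from above. In the other direction `b ≥ (a - δ) / x` gives
`e^{ε'} m ≥ e^{ε'} ((1 - q) + q / x) a - e^{ε'} q δ / x`, and both
`e^{ε'} ((1 - q) + q / x) ≥ 1` and `e^{ε'} ≤ x` hold because `x ≥ 1` and `0 ≤ q ≤ 1`,
so `e^{ε'} m + q δ ≥ a`.
-/

open MeasureTheory Real

/-- Two measures are `(ε,δ)`-DP close if for all measurable sets `A`,
`μ A ≤ e^ε · μ' A + δ` and `μ' A ≤ e^ε · μ A + δ`. -/
def DPClose {α : Type*} [MeasurableSpace α] (μ μ' : Measure α) (ε δ : ℝ) : Prop :=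
  ∀ A : Set α, MeasurableSet A →
    μ A ≤ ENNReal.ofReal (Real.exp ε) * μ' A + ENNReal.ofReal δ ∧
    μ' A ≤ ENNReal.ofReal (Real.exp ε) * μ A + ENNReal.ofReal δ

section measureReal

variable {α : Type*} [MeasurableSpace α] {μ ν : Measure α}

instance isFiniteMeasure_ofReal_smul [IsFiniteMeasure μ] {r : ℝ} :
    IsFiniteMeasure (ENNReal.ofReal r • μ) :=
  isFiniteMeasureSMulNNReal (r := r.toNNReal)

theorem measureReal_ofReal_smul_add_ofReal_smul [IsFiniteMeasure μ] [IsFiniteMeasure ν]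
    {p q : ℝ} (hp : 0 ≤ p) (hq : 0 ≤ q) (A : Set α) :
    (ENNReal.ofReal p • μ + ENNReal.ofReal q • ν).real A = p * μ.real A + q * ν.real A := by
  rw [measureReal_add_apply, measureReal_ennreal_smul_apply, measureReal_ennreal_smul_apply,
    ENNReal.toReal_ofReal hp, ENNReal.toReal_ofReal hq]

theorem measure_le_ofReal_exp_mul_add_iff [IsFiniteMeasure μ] [IsFiniteMeasure ν]
    {ε δ : ℝ} (hδ : 0 ≤ δ) (A : Set α) :
    μ A ≤ ENNReal.ofReal (exp ε) * ν A + ENNReal.ofReal δ ↔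
      μ.real A ≤ exp ε * ν.real A + δ := by
  rw [← ofReal_measureReal (μ := μ), ← ofReal_measureReal (μ := ν),
    ← ENNReal.ofReal_mul (exp_pos ε).le, ← ENNReal.ofReal_add (by positivity) hδ,
    ENNReal.ofReal_le_ofReal_iff (by positivity)]

theorem dpClose_iff_measureReal [IsFiniteMeasure μ] [IsFiniteMeasure ν] {ε δ : ℝ}
    (hδ : 0 ≤ δ) :
    DPClose μ ν ε δ ↔ ∀ A : Set α, MeasurableSet A →
      μ.real A ≤ exp ε * ν.real A + δ ∧ ν.real A ≤ exp ε * μ.real A + δ := by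
  simp only [DPClose, measure_le_ofReal_exp_mul_add_iff hδ]

end measureReal

section mixture

variable {a b q x δ : ℝ}

theorem mixture_le_of_le_mul_add (hq : 0 ≤ q) (hb : b ≤ x * a + δ) :
    (1 - q) * a + q * b ≤ (q * (x - 1) + 1) * a + q * δ := by
  nlinarith

theorem le_mixture_of_le_mul_add (hq0 : 0 ≤ q) (hq1 : q ≤ 1) (hx : 1 ≤ x) (ha : 0 ≤ a)
    (hδ : 0 ≤ δ) (hb : a ≤ x * b + δ) :
    a ≤ (q * (x - 1) + 1) * ((1 - q) * a + q * b) + q * δ := by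
  have hfactor : x ≤ (q * (x - 1) + 1) * ((1 - q) * x + q) := by
    nlinarith [mul_nonneg (mul_nonneg hq0 (sub_nonneg.2 hq1)) (sq_nonneg (x - 1))]
  have hexp_pos : 0 ≤ q * (x - 1) + 1 := by nlinarith
  have hexp_le : q * (x - 1) + 1 ≤ x := by nlinarith
  suffices a * x ≤ ((q * (x - 1) + 1) * ((1 - q) * a + q * b) + q * δ) * x from
    le_of_mul_le_mul_right this (by linarith)
  nlinarith [mul_nonneg (mul_nonneg hexp_pos hq0) (sub_nonneg.2 hb),
    mul_nonneg ha (sub_nonneg.2 hfactor),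
    mul_nonneg (mul_nonneg hq0 hδ) (sub_nonneg.2 hexp_le)]

end mixture

/-- Privacy amplification by subsampling: the mixture `(1-q)·μ₀ + q·μ₁` is
`(log(q(e^ε-1)+1), qδ)`-DP close to `μ₀`. -/
theorem dpClose_subsampling {α : Type*} [MeasurableSpace α]
    (μ₀ μ₁ : Measure α) [IsProbabilityMeasure μ₀] [IsProbabilityMeasure μ₁]
    (q ε δ : ℝ) (hq0 : 0 < q) (hq : q < 1 / 2) (hε : 0 ≤ ε) (hδ : 0 ≤ δ)
    (h : DPClose μ₁ μ₀ ε δ) :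
    DPClose (ENNReal.ofReal (1 - q) • μ₀ + ENNReal.ofReal q • μ₁) μ₀
      (Real.log (q * (Real.exp ε - 1) + 1)) (q * δ) := by
  have hx : 1 ≤ exp ε := one_le_exp hε
  rw [dpClose_iff_measureReal hδ] at h
  rw [dpClose_iff_measureReal (by positivity), exp_log (by nlinarith)]
  intro A hA
  obtain ⟨hμ₁, hμ₀⟩ := h A hA
  rw [measureReal_ofReal_smul_add_ofReal_smul (by linarith) hq0.le]
  exact ⟨mixture_le_of_le_mul_add hq0.le hμ₁,
    le_mixture_of_le_mul_add hq0.le (by linarith) hx measureReal_nonneg hδ hμ₀⟩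
end

section
/- If X is distributed as the mixture (1−p)·μ₀ + p·μ₁ and X' as (1−p')·μ₀ + p'·μ₁' where p, p' ≤ c/n, μ₀ is (ε₀,0)-DP close to μ₁, and μ₀ is (ε₀,0)-DP close to μ₁', then X and X' are (2c(e^{ε₀}−1)/n, 0)-DP close, provided c/n < 1/2. -/
open MeasureTheory Real

lemma key_ineq (E t p p' : ℝ) (hE : 1 ≤ E) (hp : 0 ≤ p) (hp' : 0 ≤ p')
    (hpt : p ≤ t) (hpt' : p' ≤ t) (ht : t < 1/2) :
    1 + p * (E - 1) ≤ Real.exp (2 * t * (E - 1)) * (1 - p' + p' / E) := by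
  have hE0 : (0:ℝ) < E := by linarith
  have hu : 0 ≤ t * (E - 1) := mul_nonneg (by linarith) (by linarith)
  have h2 : (1 + t * (E - 1))^2 ≤ Real.exp (2 * t * (E - 1)) := by
    have := Real.add_one_le_exp (t * (E - 1))
    calc (1 + t * (E - 1))^2 ≤ (Real.exp (t * (E-1)))^2 := by nlinarith
      _ = Real.exp (2 * t * (E - 1)) := by
          rw [← Real.exp_nat_mul]; ring_nf
  have h4 : 1 ≤ (1 + p' * (E - 1)) * (1 - p' + p' / E) := by
    have hb : 1 - p' + p' / E = (E - p' * (E - 1)) / E := by field_simp; ring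
    rw [hb, ← mul_div_assoc, le_div_iff₀ hE0, one_mul]
    nlinarith [mul_nonneg (mul_nonneg hp' (by linarith : (0:ℝ) ≤ 1 - p')) (sq_nonneg (E-1))]
  have hm : 0 ≤ 1 - p' + p' / E := by
    have := div_nonneg hp' (le_of_lt hE0); linarith
  have h3 : 1 + p * (E - 1) ≤ (1 + t * (E - 1)) * (1 + p' * (E - 1)) := by
    nlinarith [mul_nonneg hp' (by linarith : (0:ℝ) ≤ E - 1), mul_nonneg hp (by linarith : (0:ℝ) ≤ E - 1)]
  have hp'u : 0 ≤ p' * (E - 1) := mul_nonneg hp' (by linarith)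
  calc 1 + p * (E - 1) ≤ (1 + t * (E - 1)) * 1 := by
        rw [mul_one]
        have := mul_le_mul_of_nonneg_right hpt (by linarith : (0:ℝ) ≤ E - 1)
        linarith
    _ ≤ (1 + t * (E - 1)) * ((1 + p' * (E - 1)) * (1 - p' + p' / E)) := by
        apply mul_le_mul_of_nonneg_left h4 (by linarith)
    _ = ((1 + t * (E - 1)) * (1 + p' * (E - 1))) * (1 - p' + p' / E) := by ring
    _ ≤ Real.exp (2 * t * (E - 1)) * (1 - p' + p' / E) := by
        apply mul_le_mul_of_nonneg_right _ hm
        calc (1 + t * (E - 1)) * (1 + p' * (E - 1))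
            ≤ (1 + t * (E - 1)) * (1 + t * (E - 1)) := by
              apply mul_le_mul_of_nonneg_left _ (by linarith)
              have := mul_le_mul_of_nonneg_right hpt' (by linarith : (0:ℝ) ≤ E - 1)
              linarith
          _ ≤ Real.exp (2 * t * (E - 1)) := by
              nlinarith [Real.add_one_le_exp (t * (E-1)), Real.exp_pos (t*(E-1)),
                (by rw [← Real.exp_add]; ring_nf : Real.exp (t*(E-1)) * Real.exp (t*(E-1)) = Real.exp (2*t*(E-1)))]
  
lemma mix_upper {α : Type*} [MeasurableSpace α] (μ₀ μ₁ : Measure α) (p E : ℝ)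
    (hp0 : 0 ≤ p) (hp1 : p ≤ 1) (hE : 1 ≤ E) (A : Set α)
    (h : μ₁ A ≤ ENNReal.ofReal E * μ₀ A) :
    ENNReal.ofReal (1 - p) * μ₀ A + ENNReal.ofReal p * μ₁ A
      ≤ ENNReal.ofReal (1 + p * (E - 1)) * μ₀ A := by
  calc ENNReal.ofReal (1 - p) * μ₀ A + ENNReal.ofReal p * μ₁ A
      ≤ ENNReal.ofReal (1 - p) * μ₀ A + ENNReal.ofReal p * (ENNReal.ofReal E * μ₀ A) := by
        gcongr
    _ = (ENNReal.ofReal (1 - p) + ENNReal.ofReal (p * E)) * μ₀ A := by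
        rw [ENNReal.ofReal_mul hp0]; ring
    _ = ENNReal.ofReal (1 + p * (E - 1)) * μ₀ A := by
        rw [← ENNReal.ofReal_add (by linarith) (by positivity)]
        ring_nf
    
lemma mix_lower {α : Type*} [MeasurableSpace α] (μ₀ μ₁ : Measure α) (p E : ℝ)
    (hp0 : 0 ≤ p) (hp1 : p ≤ 1) (hE : 1 ≤ E) (A : Set α)
    (h : μ₀ A ≤ ENNReal.ofReal E * μ₁ A) :
    ENNReal.ofReal (1 - p + p / E) * μ₀ A
      ≤ ENNReal.ofReal (1 - p) * μ₀ A + ENNReal.ofReal p * μ₁ A := by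
  have hE0 : (0:ℝ) < E := by linarith
  have hstep : ENNReal.ofReal (1 / E) * μ₀ A ≤ μ₁ A := by
    calc ENNReal.ofReal (1 / E) * μ₀ A ≤ ENNReal.ofReal (1 / E) * (ENNReal.ofReal E * μ₁ A) := by
          gcongr
      _ = ENNReal.ofReal (1 / E * E) * μ₁ A := by rw [ENNReal.ofReal_mul (by positivity)]; ring
      _ = μ₁ A := by rw [one_div_mul_cancel (ne_of_gt hE0), ENNReal.ofReal_one, one_mul]
  calc ENNReal.ofReal (1 - p + p / E) * μ₀ A
      = ENNReal.ofReal (1 - p) * μ₀ A + ENNReal.ofReal (p / E) * μ₀ A := by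
        rw [show 1 - p + p / E = (1 - p) + p / E by ring,
          ENNReal.ofReal_add (by linarith) (by positivity), add_mul]
    _ = ENNReal.ofReal (1 - p) * μ₀ A + ENNReal.ofReal p * (ENNReal.ofReal (1 / E) * μ₀ A) := by
        rw [show p / E = p * (1 / E) by ring, ENNReal.ofReal_mul hp0, mul_assoc]
    _ ≤ ENNReal.ofReal (1 - p) * μ₀ A + ENNReal.ofReal p * μ₁ A := by gcongr

/-- If `X ~ (1-p)·μ₀ + p·μ₁` and `X' ~ (1-p')·μ₀ + p'·μ₁'` with `p, p' ≤ c/n`,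
`μ₀` being `(ε₀,0)`-close to both `μ₁` and `μ₁'`, then the two mixtures are
`(2c(e^{ε₀}-1)/n, 0)`-DP close. -/
theorem dpClose_mixtures_of_small_weight {α : Type*} [MeasurableSpace α]
    (μ₀ μ₁ μ₁' : Measure α) [IsProbabilityMeasure μ₀] [IsProbabilityMeasure μ₁]
    [IsProbabilityMeasure μ₁']
    (n : ℕ) (hn : 0 < n) (c ε₀ p p' : ℝ) (hc : 0 < c) (hε₀ : 0 ≤ ε₀)
    (hp0 : 0 ≤ p) (hp0' : 0 ≤ p')
    (hp : p ≤ c / n) (hp' : p' ≤ c / n) (hcn : c / n < 1 / 2)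
    (h₁ : DPClose μ₀ μ₁ ε₀ 0) (h₁' : DPClose μ₀ μ₁' ε₀ 0) :
    DPClose (ENNReal.ofReal (1 - p) • μ₀ + ENNReal.ofReal p • μ₁)
            (ENNReal.ofReal (1 - p') • μ₀ + ENNReal.ofReal p' • μ₁')
            (2 * c * (Real.exp ε₀ - 1) / n) 0 := by
  intro A hA
  set E := Real.exp ε₀ with hEdef
  have hE : 1 ≤ E := Real.one_le_exp hε₀
  have hp1 : p ≤ 1 := by linarith
  have hp1' : p' ≤ 1 := by linarith
  have hexp : 2 * c * (E - 1) / n = 2 * (c / n) * (E - 1) := by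
    field_simp
  obtain ⟨ha, hb⟩ := h₁ A hA
  obtain ⟨ha', hb'⟩ := h₁' A hA
  simp only [ENNReal.ofReal_zero, add_zero] at ha hb ha' hb' ⊢
  have happ : ∀ (q : ℝ) (ν : Measure α),
      (ENNReal.ofReal (1 - q) • μ₀ + ENNReal.ofReal q • ν) A
        = ENNReal.ofReal (1 - q) * μ₀ A + ENNReal.ofReal q * ν A := by
    intro q ν
    simp [Measure.add_apply, Measure.smul_apply, smul_eq_mul]
  rw [happ, happ]
  have hcn2 : c / n < 1 / 2 := hcn
  constructor
  · calc ENNReal.ofReal (1 - p) * μ₀ A + ENNReal.ofReal p * μ₁ A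
        ≤ ENNReal.ofReal (1 + p * (E - 1)) * μ₀ A := mix_upper μ₀ μ₁ p E hp0 hp1 hE A hb
      _ ≤ ENNReal.ofReal (Real.exp (2 * c * (E - 1) / n) * (1 - p' + p' / E)) * μ₀ A := by
          gcongr
          rw [hexp]
          exact key_ineq E (c / n) p p' hE hp0 hp0' hp hp' hcn2
      _ = ENNReal.ofReal (Real.exp (2 * c * (E - 1) / n)) * (ENNReal.ofReal (1 - p' + p' / E) * μ₀ A) := by
          rw [ENNReal.ofReal_mul (Real.exp_pos _).le, mul_assoc]
      _ ≤ ENNReal.ofReal (Real.exp (2 * c * (E - 1) / n)) *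
            (ENNReal.ofReal (1 - p') * μ₀ A + ENNReal.ofReal p' * μ₁' A) := by
          gcongr
          exact mix_lower μ₀ μ₁' p' E hp0' hp1' hE A ha'
  · calc ENNReal.ofReal (1 - p') * μ₀ A + ENNReal.ofReal p' * μ₁' A
        ≤ ENNReal.ofReal (1 + p' * (E - 1)) * μ₀ A := mix_upper μ₀ μ₁' p' E hp0' hp1' hE A hb'
      _ ≤ ENNReal.ofReal (Real.exp (2 * c * (E - 1) / n) * (1 - p + p / E)) * μ₀ A := by
          gcongr
          rw [hexp]
          exact key_ineq E (c / n) p' p hE hp0' hp0 hp' hp hcn2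
      _ = ENNReal.ofReal (Real.exp (2 * c * (E - 1) / n)) * (ENNReal.ofReal (1 - p + p / E) * μ₀ A) := by
          rw [ENNReal.ofReal_mul (Real.exp_pos _).le, mul_assoc]
      _ ≤ ENNReal.ofReal (Real.exp (2 * c * (E - 1) / n)) *
            (ENNReal.ofReal (1 - p) * μ₀ A + ENNReal.ofReal p * μ₁ A) := by
          gcongr
          exact mix_lower μ₀ μ₁ p E hp0 hp1 hE A ha
end

section
/- Pure ε-DP implies (α, αε²/2)-Rényi DP: if random variables X, X' satisfy P[X ∈ A] ≤ e^ε·P[X' ∈ A] and P[X' ∈ A] ≤ e^ε·P[X ∈ A] for all measurable A (with both absolutely continuous w.r.t. each other), then for every α > 1, the Rényi divergence of order α satisfies D_α(X ‖ X') ≤ αε²/2, provided discrete distributions are considered. -/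
/-!
Taking singleton events gives `e^{-ε} ≤ P x / Q x ≤ e^ε`. The Rényi sum is the `Q`-mean of
`(P / Q) ^ a`, while the `Q`-mean of `P / Q` is `1`; by convexity of `t ↦ t ^ a` the sum is at most
the value at `1` of the chord of `t ^ a` over `[e^{-ε}, e^ε]`, which is
`cosh ((2a - 1) ε / 2) / cosh (ε / 2)`. Since `cosh t · e^{-t²/2}` decreases on `[0, ∞)`
(because `tanh t ≤ t`), this ratio is at most `e^{a (a - 1) ε² / 2}`.
-/

open Real Set Finset

namespace Real

lemma sinh_le_mul_cosh {t : ℝ} (ht : 0 ≤ t) : sinh t ≤ t * cosh t := by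
  have hmono : MonotoneOn (fun s => s * cosh s - sinh s) (Ici 0) := by
    refine monotoneOn_of_hasDerivWithinAt_nonneg (f' := fun s => s * sinh s) (convex_Ici 0)
      (by fun_prop) (fun s _ => ?_) (fun s hs => ?_)
    · exact (((hasDerivAt_id s).mul (hasDerivAt_cosh s)).sub (hasDerivAt_sinh s)
        |>.congr_deriv (by simp)).hasDerivWithinAt
    · rw [interior_Ici] at hs
      exact mul_nonneg hs.out.le (sinh_nonneg_iff.2 hs.out.le)
  simpa using hmono self_mem_Ici ht ht

lemma antitoneOn_cosh_mul_exp_neg_sq_div_two :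
    AntitoneOn (fun t => cosh t * exp (-(t ^ 2 / 2))) (Ici 0) := by
  refine antitoneOn_of_hasDerivWithinAt_nonpos
    (f' := fun t => (sinh t - t * cosh t) * exp (-(t ^ 2 / 2))) (convex_Ici 0)
    (by fun_prop) (fun t _ => ?_) (fun t ht => ?_)
  · have := (hasDerivAt_cosh t).mul ((((hasDerivAt_id t).pow 2).div_const 2).neg.exp)
    exact (this.congr_deriv (by simp; ring)).hasDerivWithinAt
  · rw [interior_Ici] at ht
    exact mul_nonpos_of_nonpos_of_nonneg (sub_nonpos.2 (sinh_le_mul_cosh ht.out.le)) (exp_pos _).le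

lemma cosh_le_cosh_mul_exp {s t : ℝ} (hs : 0 ≤ s) (hst : s ≤ t) :
    cosh t ≤ cosh s * exp ((t ^ 2 - s ^ 2) / 2) := by
  have h := antitoneOn_cosh_mul_exp_neg_sq_div_two hs (hs.trans hst) hst
  calc cosh t = cosh t * exp (-(t ^ 2 / 2)) * exp (t ^ 2 / 2) := by
        rw [mul_assoc, ← exp_add, neg_add_cancel, exp_zero, mul_one]
    _ ≤ cosh s * exp (-(s ^ 2 / 2)) * exp (t ^ 2 / 2) := by gcongr
    _ = cosh s * exp ((t ^ 2 - s ^ 2) / 2) := by rw [mul_assoc, ← exp_add]; ring_nf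

lemma exp_sub_exp_neg_eq_mul_sinh_mul_cosh (ε : ℝ) :
    exp ε - exp (-ε) = 4 * sinh (ε / 2) * cosh (ε / 2) := by
  calc exp ε - exp (-ε) = 2 * sinh (2 * (ε / 2)) := by rw [sinh_eq]; ring_nf
    _ = 4 * sinh (ε / 2) * cosh (ε / 2) := by rw [sinh_two_mul]; ring

/-- The chord of `t ↦ t ^ a` over `[e^{-ε}, e^ε]` at `1`, scaled by the length of the interval. -/
lemma rpow_chord_exp_neg_exp_le {ε a : ℝ} (hε : 0 ≤ ε) (ha : 1 ≤ a) :
    (exp ε - 1) * exp (-ε) ^ a + (1 - exp (-ε)) * exp ε ^ a ≤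
      (exp ε - exp (-ε)) * exp (a * (a - 1) * ε ^ 2 / 2) := by
  have hcosh := cosh_le_cosh_mul_exp (by positivity : 0 ≤ ε / 2)
    (le_mul_of_one_le_left (by positivity) (by linarith : 1 ≤ 2 * a - 1))
  have hsinh : 0 ≤ sinh (ε / 2) := sinh_nonneg_iff.2 (by positivity)
  have hchord : (exp ε - 1) * exp (-ε) ^ a + (1 - exp (-ε)) * exp ε ^ a =
      4 * sinh (ε / 2) * cosh ((2 * a - 1) * (ε / 2)) := by
    rw [← exp_mul, ← exp_mul, sinh_eq, cosh_eq]
    ring_nf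
    simp only [← exp_add]
    ring_nf
  calc _ = 4 * sinh (ε / 2) * cosh ((2 * a - 1) * (ε / 2)) := hchord
    _ ≤ 4 * sinh (ε / 2) *
          (cosh (ε / 2) * exp ((((2 * a - 1) * (ε / 2)) ^ 2 - (ε / 2) ^ 2) / 2)) := by
      gcongr
    _ = _ := by rw [exp_sub_exp_neg_eq_mul_sinh_mul_cosh]; ring_nf

end Real

lemma ConvexOn.sub_mul_le_chord {f : ℝ → ℝ} {lo hi x : ℝ} (hf : ConvexOn ℝ (Icc lo hi) f)
    (hx : x ∈ Icc lo hi) : (hi - lo) * f x ≤ (hi - x) * f lo + (x - lo) * f hi := by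
  have hlo : lo ∈ Icc lo hi := left_mem_Icc.2 (hx.1.trans hx.2)
  have hhi : hi ∈ Icc lo hi := right_mem_Icc.2 (hx.1.trans hx.2)
  rcases hx.1.eq_or_lt with rfl | hlx
  · simp
  rcases hx.2.eq_or_lt with rfl | hxh
  · simp
  exact hf.secant_mono_aux1 hlo hhi hlx hxh

lemma ConvexOn.sub_mul_sum_le_chord {ι : Type*} (s : Finset ι) {f : ℝ → ℝ} {lo hi : ℝ}
    (hf : ConvexOn ℝ (Icc lo hi) f) {w r : ι → ℝ} (hw : ∀ i ∈ s, 0 ≤ w i)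
    (hr : ∀ i ∈ s, r i ∈ Icc lo hi) :
    (hi - lo) * ∑ i ∈ s, w i * f (r i) ≤
      (hi * ∑ i ∈ s, w i - ∑ i ∈ s, w i * r i) * f lo +
        (∑ i ∈ s, w i * r i - lo * ∑ i ∈ s, w i) * f hi := by
  calc (hi - lo) * ∑ i ∈ s, w i * f (r i) = ∑ i ∈ s, w i * ((hi - lo) * f (r i)) := by
        rw [mul_sum]; exact sum_congr rfl fun _ _ => by ring
    _ ≤ ∑ i ∈ s, w i * ((hi - r i) * f lo + (r i - lo) * f hi) :=
        sum_le_sum fun i hi => mul_le_mul_of_nonneg_left (hf.sub_mul_le_chord (hr i hi)) (hw i hi)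
    _ = _ := by
        simp only [mul_sum, sum_mul, ← sum_sub_distrib, ← sum_add_distrib]
        exact sum_congr rfl fun _ _ => by ring

lemma sum_rpow_mul_rpow_one_sub_le {ι : Type*} [Fintype ι] {P Q : ι → ℝ} (hP : ∀ x, 0 ≤ P x)
    (hQ : ∀ x, 0 < Q x) (hPsum : ∑ x, P x = 1) (hQsum : ∑ x, Q x = 1) {ε a : ℝ} (hε : 0 ≤ ε)
    (ha : 1 ≤ a) (hratio : ∀ x, P x / Q x ∈ Icc (exp (-ε)) (exp ε)) :
    ∑ x, P x ^ a * Q x ^ (1 - a) ≤ exp (a * (a - 1) * ε ^ 2 / 2) := by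
  have hterm : ∀ x, P x ^ a * Q x ^ (1 - a) = Q x * (P x / Q x) ^ a := fun x => by
    rw [div_rpow (hP x) (hQ x).le, rpow_sub (hQ x), rpow_one]
    field_simp
  have hmean : ∑ x, Q x * (P x / Q x) = 1 := by
    rw [← hPsum]
    exact sum_congr rfl fun x _ => mul_div_cancel₀ _ (hQ x).ne'
  have hconvex : ConvexOn ℝ (Icc (exp (-ε)) (exp ε)) (· ^ a) := (convexOn_rpow ha).subset
    (Icc_subset_Ici_self.trans (Ici_subset_Ici.2 (exp_pos _).le)) (convex_Icc _ _)
  have hchord := hconvex.sub_mul_sum_le_chord univ (fun x _ => (hQ x).le) (fun x _ => hratio x)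
  rw [hQsum, hmean, mul_one, mul_one] at hchord
  simp_rw [hterm]
  rcases hε.eq_or_lt with rfl | hε
  · have hratio_one : ∀ x, P x / Q x = 1 := fun x => by simpa using hratio x
    simp [hratio_one, hQsum]
  · exact le_of_mul_le_mul_left (hchord.trans (rpow_chord_exp_neg_exp_le hε.le ha))
      (sub_pos.2 (exp_lt_exp.2 (by linarith)))

/-- Pure `ε`-DP implies `(α, αε²/2)`-Rényi DP for discrete distributions with the
same (full) support: if `P(A) ≤ e^ε·Q(A)` and `Q(A) ≤ e^ε·P(A)` for all sets `A`,
then for every `α > 1`, `D_α(P ‖ Q) = (1/(α−1))·log Σ_x P(x)^α·Q(x)^{1−α} ≤ αε²/2`. -/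
theorem pure_dp_implies_renyi {α : Type*} [Fintype α]
    (P Q : α → ℝ) (hP : ∀ x, 0 < P x) (hQ : ∀ x, 0 < Q x)
    (hPsum : ∑ x, P x = 1) (hQsum : ∑ x, Q x = 1)
    (ε : ℝ) (hε : 0 ≤ ε)
    (hPQ : ∀ A : Finset α, ∑ x ∈ A, P x ≤ Real.exp ε * ∑ x ∈ A, Q x)
    (hQP : ∀ A : Finset α, ∑ x ∈ A, Q x ≤ Real.exp ε * ∑ x ∈ A, P x) :
    ∀ a : ℝ, 1 < a →
      (1 / (a - 1)) * Real.log (∑ x, P x ^ a * Q x ^ (1 - a)) ≤ a * ε ^ 2 / 2 := by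
  intro a ha
  have hratio : ∀ x, P x / Q x ∈ Icc (exp (-ε)) (exp ε) := fun x => by
    have hupper : P x ≤ exp ε * Q x := by simpa using hPQ {x}
    have hlower : Q x ≤ exp ε * P x := by simpa using hQP {x}
    constructor
    · rw [le_div_iff₀ (hQ x), exp_neg, inv_mul_le_iff₀ (exp_pos ε)]
      exact hlower
    · exact (div_le_iff₀ (hQ x)).2 hupper
  have hsum := sum_rpow_mul_rpow_one_sub_le (fun x => (hP x).le) hQ hPsum hQsum hε ha.le hratio
  have hsum_pos : 0 < ∑ x, P x ^ a * Q x ^ (1 - a) :=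
    sum_pos (fun x _ => mul_pos (rpow_pos_of_pos (hP x) a) (rpow_pos_of_pos (hQ x) _))
      (nonempty_of_sum_ne_zero (hPsum ▸ one_ne_zero))
  rw [one_div, inv_mul_le_iff₀ (sub_pos.2 ha), log_le_iff_le_exp hsum_pos]
  exact hsum.trans_eq (by ring_nf)
end
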